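/- arXiv:2401.04814 — 3 statements merged into one kernel-verified Lean document; each statement's English description precedes it below -/
import Mathlib

section
/- Let q be an odd prime power, V = F_q^d with quadratic form Q(v) = v₁² + ... + v_d², χ a nontrivial additive character of F_q, and for m ∈ V, t ∈ F_q define λ_{m,t} = Σ_{x ∈ V, x ≠ 0, Q(x) = t} χ(m·x). Then λ_{m,t} = q^{d−1}·[m = 0] − [t = 0] + (1/q) Σ_{s ∈ F_q, s ≠ 0} χ(−st − Q(m)/(4s)) G(s)^d, where G(s) = Σ_{y ∈ F_q} χ(sy²) is the Gauss sum and [·] is the indicator. -/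
/-!
Detect the sphere `Q x = t` by orthogonality: `q [Q x = t] = ∑ s, χ (s (Q x - t))`. After
exchanging the sums, the sum over `x` factors over the coordinates. For `s = 0` it is the
orthogonality sum of `χ (m ⬝ x)`, giving `q ^ d [m = 0]`; for `s ≠ 0` completing the square turns
each coordinate into `χ (-m_i ^ 2 / (4 s)) G(s)`. Removing the point `x = 0` costs `[t = 0]`.
-/

open Finset

lemma FiniteField.two_ne_zero_of_odd_card {F : Type*} [Field F] [Fintype F]
    (hF : Odd (Fintype.card F)) : (2 : F) ≠ 0 :=
  Ring.two_ne_zero fun h ↦ by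
    have := FiniteField.even_card_of_char_two h
    have := Nat.odd_iff.mp hF
    omega

lemma Finset.sum_filter_ne_and_eq_sub {V M : Type*} [DecidableEq V] [AddCommGroup M]
    {s : Finset V} {a : V} (ha : a ∈ s) (p : V → Prop) [DecidablePred p] (f : V → M) :
    ∑ x ∈ s.filter (fun x ↦ x ≠ a ∧ p x), f x = ∑ x ∈ s.filter p, f x - if p a then f a else 0 := by
  rw [← filter_filter, filter_ne', filter_erase]
  split_ifs with hp
  · exact sum_erase_eq_sub (mem_filter.mpr ⟨ha, hp⟩)
  · rw [erase_eq_of_notMem fun h ↦ hp (mem_filter.mp h).2, sub_zero]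

namespace AddChar

variable {A R ι : Type*}

lemma map_sum_eq_prod [AddCommMonoid A] [CommMonoid R] (ψ : AddChar A R) (s : Finset ι)
    (f : ι → A) : ψ (∑ i ∈ s, f i) = ∏ i ∈ s, ψ (f i) := by
  classical
  induction s using Finset.cons_induction with
  | empty => simp
  | cons a s ha ih => rw [sum_cons, prod_cons, map_add_eq_mul, ih]

lemma sum_pi_map_sum [AddCommMonoid A] [Fintype A] [CommSemiring R] [Fintype ι] [DecidableEq ι]
    (ψ : AddChar A R) (f : ι → A → A) :
    ∑ x : ι → A, ψ (∑ i, f i (x i)) = ∏ i, ∑ y, ψ (f i y) := by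
  simp only [Fintype.prod_sum, map_sum_eq_prod]

section FiniteField

variable {F : Type*} [Field F] [Fintype F] [Fintype ι] [DecidableEq ι]

lemma sum_pi_mul_eq_ite [CommRing R] [IsDomain R] [DecidableEq F] {ψ : AddChar F R}
    (hψ : ψ.IsPrimitive) (m : ι → F) :
    ∑ x : ι → F, ψ (∑ i, m i * x i)
      = if m = 0 then (Fintype.card F : R) ^ Fintype.card ι else 0 := by
  have hcoord (i : ι) : ∑ y, ψ (m i * y) = if m i = 0 then (Fintype.card F : R) else 0 := by
    simp_rw [mul_comm (m i)]
    exact_mod_cast sum_mulShift (m i) hψ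
  rw [sum_pi_map_sum ψ (fun i y => m i * y)]
  simp_rw [hcoord]
  split_ifs with hm
  · simp [hm]
  · obtain ⟨i, hi⟩ := Function.ne_iff.mp hm
    exact prod_eq_zero (mem_univ i) (if_neg hi)

lemma sum_mul_sq_add_mul [CommRing R] (ψ : AddChar F R) (h2 : (2 : F) ≠ 0) {s : F}
    (hs : s ≠ 0) (c : F) :
    ∑ y, ψ (s * y ^ 2 + c * y) = ψ (-c ^ 2 / (4 * s)) * ∑ y, ψ (s * y ^ 2) := by
  have hsquare (y : F) :
      s * (y - c / (2 * s)) ^ 2 + c * (y - c / (2 * s)) = -c ^ 2 / (4 * s) + s * y ^ 2 := by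
    have h4 : (4 : F) ≠ 0 := by
      rw [show (4 : F) = 2 * 2 by norm_num]; exact mul_ne_zero h2 h2
    field_simp
    ring
  rw [← (Equiv.subRight (c / (2 * s))).sum_comp, mul_sum]
  simp only [Equiv.subRight_apply, hsquare, map_add_eq_mul]

lemma sum_pi_mul_sq_add_mul [CommRing R] (ψ : AddChar F R) (h2 : (2 : F) ≠ 0) {s : F}
    (hs : s ≠ 0) (m : ι → F) :
    ∑ x : ι → F, ψ (∑ i, (s * x i ^ 2 + m i * x i))
      = ψ (-(∑ i, m i ^ 2) / (4 * s)) * (∑ y, ψ (s * y ^ 2)) ^ Fintype.card ι := by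
  rw [sum_pi_map_sum ψ (fun i y => s * y ^ 2 + m i * y)]
  simp_rw [sum_mul_sq_add_mul ψ h2 hs, prod_mul_distrib, prod_const, card_univ,
    ← map_sum_eq_prod, ← sum_div, sum_neg_distrib]

lemma card_mul_sum_filter_eq [CommRing R] [IsDomain R] [DecidableEq F] {ψ : AddChar F R}
    (hψ : ψ.IsPrimitive) {V : Type*} [Fintype V] (Q : V → F) (t : F) (g : V → R) :
    (Fintype.card F : R) * ∑ x ∈ univ.filter (fun x ↦ Q x = t), g x
      = ∑ s, ∑ x, ψ (s * (Q x - t)) * g x := by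
  rw [sum_comm, mul_sum, sum_filter]
  refine sum_congr rfl fun x _ ↦ ?_
  rw [← sum_mul, sum_mulShift _ hψ]
  simp [sub_eq_zero]

lemma sum_pi_quadratic_phase [CommRing R] (ψ : AddChar F R) (h2 : (2 : F) ≠ 0) {s : F}
    (hs : s ≠ 0) (t : F) (m : ι → F) :
    ∑ x : ι → F, ψ (s * (∑ i, x i ^ 2 - t)) * ψ (∑ i, m i * x i)
      = ψ (-(s * t) - (∑ i, m i ^ 2) / (4 * s)) * (∑ y, ψ (s * y ^ 2)) ^ Fintype.card ι := by
  have hsplit (x : ι → F) : ψ (s * (∑ i, x i ^ 2 - t)) * ψ (∑ i, m i * x i)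
      = ψ (-(s * t)) * ψ (∑ i, (s * x i ^ 2 + m i * x i)) := by
    rw [← map_add_eq_mul, ← map_add_eq_mul, sum_add_distrib, ← mul_sum]
    ring_nf
  simp_rw [hsplit, ← mul_sum, sum_pi_mul_sq_add_mul ψ h2 hs, ← mul_assoc, ← map_add_eq_mul,
    neg_div, sub_eq_add_neg]

end FiniteField

end AddChar

open AddChar in
/-- Eigenvalues of the distance-t graph: the character sum over the sphere of radius t
equals q^{d−1}·[m=0] − [t=0] + (1/q) Σ_{s≠0} χ(−st − Q(m)/(4s)) G(s)^d. -/
theorem eigenvalue_formula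
    (F : Type*) [Field F] [Fintype F] [DecidableEq F]
    (hodd : Odd (Fintype.card F))
    (d : ℕ) (hd : 1 ≤ d)
    (χ : AddChar F ℂ) (hχ : χ ≠ 1) (m : Fin d → F) (t : F) :
    ∑ x ∈ univ.filter (fun x : Fin d → F => x ≠ 0 ∧ ∑ i, x i ^ 2 = t),
        χ (∑ i, m i * x i)
      = (if m = 0 then (Fintype.card F : ℂ) ^ (d - 1) else 0)
        - (if t = 0 then 1 else 0)
        + (Fintype.card F : ℂ)⁻¹ *
            ∑ s ∈ univ.filter (fun s : F => s ≠ 0),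
              χ (-(s * t) - (∑ i, m i ^ 2) / (4 * s)) * (∑ y : F, χ (s * y ^ 2)) ^ d := by
  set q : ℂ := (Fintype.card F : ℂ)
  have hψ := IsPrimitive.of_ne_one hχ
  have h2 := FiniteField.two_ne_zero_of_odd_card hodd
  have hsphere : q * ∑ x ∈ univ.filter (fun x : Fin d → F => ∑ i, x i ^ 2 = t),
      χ (∑ i, m i * x i) = (if m = 0 then q ^ d else 0) + ∑ s ∈ univ.filter (fun s : F => s ≠ 0),
        χ (-(s * t) - (∑ i, m i ^ 2) / (4 * s)) * (∑ y : F, χ (s * y ^ 2)) ^ d := by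
    rw [card_mul_sum_filter_eq hψ, ← add_sum_erase _ _ (mem_univ 0), ← filter_ne']
    congr 1
    · simpa using sum_pi_mul_eq_ite hψ m
    · exact sum_congr rfl fun s hs ↦ by
        simpa using sum_pi_quadratic_phase χ h2 (mem_filter.mp hs).2 t m
  have hq : q ≠ 0 := Nat.cast_ne_zero.mpr Fintype.card_ne_zero
  rw [sum_filter_ne_and_eq_sub (mem_univ 0), (eq_inv_mul_iff_mul_eq₀ hq).mpr hsphere]
  obtain ⟨e, rfl⟩ : ∃ e, d = e + 1 := ⟨d - 1, by omega⟩
  rw [mul_add, mul_ite, pow_succ', inv_mul_cancel_left₀ hq, mul_zero]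
  simp only [ne_eq, Pi.zero_apply, OfNat.ofNat_ne_zero, not_false_eq_true, zero_pow,
    sum_const_zero, eq_comm (b := t), mul_zero, map_zero_eq_one, add_tsub_cancel_right]
  ring
end

section
/- Let q be an odd prime power, k ∈ F_q^×, and i, j ∈ F_q. Fix x = (0,0) and y ∈ F_q² with y₁² + y₂² = k. Then the number of z ∈ F_q² with z₁² + z₂² = i and (z₁−y₁)² + (z₂−y₂)² = j equals ((4σ₂ − σ₁²) | q) + 1, where σ₁ = i + j + k, σ₂ = ij + jk + ki, and (·|q) is the quadratic character of F_q (with (0|q) = 0). In particular this count is independent of the choice of y with Q(y) = k. -/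
/-!
Identify `F × F` with `F[√-1]`, where `Q` is the norm. Multiplying by the conjugate of `y` is a
bijection of the plane (as `Q y = k ≠ 0`) sending `z` to `(⟨z, y⟩, z × y)`, and it scales `Q` by `k`.
Since `Q (z - y) = Q z - 2 ⟨z, y⟩ + Q y`, the two conditions on `z` become `Q = i k` and first
coordinate `(i + k - j) / 2` on the image, so the count is the number of square roots of
`4 i k - (i + k - j) ^ 2 = 4 σ₂ - σ₁ ^ 2`.
-/

open Finset

namespace PlanarEuclidean

variable {F : Type*} [Field F]

def sqNorm (z : F × F) : F := z.1 ^ 2 + z.2 ^ 2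

def mulConj (y z : F × F) : F × F := (z.1 * y.1 + z.2 * y.2, z.2 * y.1 - z.1 * y.2)

lemma sqNorm_mulConj (y z : F × F) : sqNorm (mulConj y z) = sqNorm z * sqNorm y := by
  unfold sqNorm mulConj; ring

lemma sqNorm_sub (z y : F × F) : sqNorm (z - y) = sqNorm z - 2 * (mulConj y z).1 + sqNorm y := by
  unfold sqNorm mulConj; simp only [Prod.fst_sub, Prod.snd_sub]; ring

def mulConjEquiv (y : F × F) (hy : sqNorm y ≠ 0) : F × F ≃ F × F where
  toFun := mulConj y
  invFun p := ((p.1 * y.1 - p.2 * y.2) / sqNorm y, (p.1 * y.2 + p.2 * y.1) / sqNorm y)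
  left_inv z := by
    unfold sqNorm at hy ⊢; ext <;> simp only [mulConj] <;> field_simp <;> ring
  right_inv p := by
    unfold sqNorm at hy ⊢; ext <;> simp only [mulConj] <;> field_simp <;> ring

variable [Fintype F] [DecidableEq F]

lemma card_sqNorm_eq_and_sqNorm_sub_eq {y : F × F} (hy : sqNorm y ≠ 0) (i j : F) :
    #{z : F × F | sqNorm z = i ∧ sqNorm (z - y) = j}
      = #{p : F × F | sqNorm p = i * sqNorm y ∧ 2 * p.1 = i + sqNorm y - j} := by
  refine card_equiv (mulConjEquiv y hy) fun z => ?_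
  simp only [mem_filter, mem_univ, true_and, mulConjEquiv, Equiv.coe_fn_mk, sqNorm_mulConj,
    sqNorm_sub, mul_left_inj' hy]
  constructor
  · rintro ⟨rfl, rfl⟩; exact ⟨rfl, by ring⟩
  · rintro ⟨rfl, h⟩; exact ⟨rfl, by linear_combination -h⟩

lemma card_sqNorm_eq_and_two_mul_fst_eq (h2 : (2 : F) ≠ 0) (a b : F) :
    #{p : F × F | sqNorm p = a ∧ 2 * p.1 = b} = #{w : F | w ^ 2 = 4 * a - b ^ 2} := by
  refine card_nbij' (fun p => 2 * p.2) (fun w => (b / 2, w / 2)) ?_ ?_ ?_ ?_ <;> intro x hx <;>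
    simp only [mem_coe, mem_filter, mem_univ, true_and] at hx ⊢
  · unfold sqNorm at hx
    linear_combination 4 * hx.1 - (2 * x.1 + b) * hx.2
  · exact ⟨by unfold sqNorm; field_simp; linear_combination hx, by field_simp⟩
  · ext
    · field_simp; exact hx.2.symm
    · field_simp
  · field_simp

end PlanarEuclidean

/-- Intersection numbers of the planar Euclidean scheme: for k ≠ 0 and y with Q(y) = k,
the number of z with Q(z) = i and Q(z − y) = j is ((4σ₂ − σ₁²)|q) + 1. -/
theorem planar_intersection_numbers
    (F : Type*) [Field F] [Fintype F] [DecidableEq F]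
    (hodd : Odd (Fintype.card F))
    (i j k : F) (hk : k ≠ 0) (y : F × F) (hy : y.1 ^ 2 + y.2 ^ 2 = k) :
    ((univ.filter (fun z : F × F =>
        z.1 ^ 2 + z.2 ^ 2 = i ∧ (z.1 - y.1) ^ 2 + (z.2 - y.2) ^ 2 = j)).card : ℤ)
      = quadraticChar F (4 * (i * j + j * k + k * i) - (i + j + k) ^ 2) + 1 := by
  have hchar : ringChar F ≠ 2 := fun h => by
    have := FiniteField.even_card_of_char_two h
    rw [Nat.odd_iff] at hodd
    omega
  have hy' : PlanarEuclidean.sqNorm y = k := hy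
  have hcount := PlanarEuclidean.card_sqNorm_eq_and_sqNorm_sub_eq (hy'.symm ▸ hk) i j
  rw [PlanarEuclidean.card_sqNorm_eq_and_two_mul_fst_eq (Ring.two_ne_zero hchar), hy'] at hcount
  have hdisc : 4 * (i * k) - (i + k - j) ^ 2 = 4 * (i * j + j * k + k * i) - (i + j + k) ^ 2 := by
    ring
  rw [← hdisc, ← quadraticChar_card_sqrts hchar, Set.toFinset_ofPred]
  exact_mod_cast hcount
end

section
/- Let q be an odd prime power and let x, y, z ∈ F_q² be three points with pairwise distances k = Q(x−y), i = Q(x−z), j = Q(y−z) where Q(v) = v₁² + v₂². Set σ₁ = i+j+k and σ₂ = ij+jk+ki. Then x, y, z are collinear (lie on a common affine line) if and only if 4σ₂ = σ₁². -/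
open Finset

/-- Collinearity criterion: three points x, y, z of F_q² with squared side-lengths
k = Q(x−y), i = Q(x−z), j = Q(y−z) are collinear iff 4σ₂ = σ₁². -/
theorem collinear_iff_discriminant
    (F : Type*) [Field F] [Fintype F]
    (hodd : Odd (Fintype.card F))
    (x y z : F × F)
    (i j k : F)
    (hk : (x.1 - y.1) ^ 2 + (x.2 - y.2) ^ 2 = k)
    (hi : (x.1 - z.1) ^ 2 + (x.2 - z.2) ^ 2 = i)
    (hj : (y.1 - z.1) ^ 2 + (y.2 - z.2) ^ 2 = j) :
    Collinear F ({x, y, z} : Set (F × F)) ↔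
      4 * (i * j + j * k + k * i) = (i + j + k) ^ 2 := by
  have h2 : (2 : F) ≠ 0 := by
    intro h2
    have hdvd : (ringChar F : ℕ) ∣ 2 := (ringChar.spec F 2).mp (by exact_mod_cast h2)
    have hp : (ringChar F).Prime := CharP.char_is_prime F (ringChar F)
    have hchar : ringChar F = 2 := (Nat.prime_dvd_prime_iff_eq hp Nat.prime_two).mp hdvd
    have := FiniteField.even_card_of_char_two hchar
    have := Nat.odd_iff.mp hodd
    omega
  have hdet : Collinear F ({x, y, z} : Set (F × F)) ↔
      (x.1 - z.1) * (y.2 - z.2) - (x.2 - z.2) * (y.1 - z.1) = 0 := by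
    rw [collinear_iff_of_mem (show z ∈ ({x, y, z} : Set (F × F)) by simp)]
    constructor
    · rintro ⟨v, hv⟩
      obtain ⟨r, hr⟩ := hv x (by simp)
      obtain ⟨s, hs⟩ := hv y (by simp)
      have hx1 : x.1 - z.1 = r * v.1 := by rw [hr]; simp [Prod.smul_def]
      have hx2 : x.2 - z.2 = r * v.2 := by rw [hr]; simp [Prod.smul_def]
      have hy1 : y.1 - z.1 = s * v.1 := by rw [hs]; simp [Prod.smul_def]
      have hy2 : y.2 - z.2 = s * v.2 := by rw [hs]; simp [Prod.smul_def]
      rw [hx1, hx2, hy1, hy2]; ring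
    · intro hd
      by_cases hxz : x = z
      · refine ⟨y - z, ?_⟩
        rintro p hp
        rcases hp with rfl | rfl | rfl
        · exact ⟨0, by simp [hxz]⟩
        · exact ⟨1, by simp [Prod.ext_iff]⟩
        · exact ⟨0, by simp⟩
      · have hne : x.1 - z.1 ≠ 0 ∨ x.2 - z.2 ≠ 0 := by
          by_contra h
          push_neg at h
          exact hxz (Prod.ext (sub_eq_zero.mp h.1) (sub_eq_zero.mp h.2))
        have key : ∃ t : F, y.1 - z.1 = t * (x.1 - z.1) ∧ y.2 - z.2 = t * (x.2 - z.2) := by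
          rcases hne with h1 | h1
          · refine ⟨(y.1 - z.1) / (x.1 - z.1), by field_simp, ?_⟩
            field_simp
            linear_combination hd
          · refine ⟨(y.2 - z.2) / (x.2 - z.2), ?_, by field_simp⟩
            field_simp
            linear_combination -hd
        obtain ⟨t, ht1, ht2⟩ := key
        refine ⟨x - z, ?_⟩
        rintro p hp
        rcases hp with rfl | rfl | rfl
        · exact ⟨1, by simp [Prod.ext_iff]⟩
        · refine ⟨t, ?_⟩
          have e1 : p.1 = t * (x.1 - z.1) + z.1 := by rw [← ht1]; ring
          have e2 : p.2 = t * (x.2 - z.2) + z.2 := by rw [← ht2]; ring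
          simp [Prod.ext_iff, Prod.smul_def, e1, e2]
        · exact ⟨0, by simp⟩
  rw [hdet]
  set D := (x.1 - z.1) * (y.2 - z.2) - (x.2 - z.2) * (y.1 - z.1) with hD
  have hiden : 4 * (i * j + j * k + k * i) - (i + j + k) ^ 2 = 4 * D ^ 2 := by
    rw [← hi, ← hj, ← hk, hD]; ring
  constructor
  · intro h
    linear_combination hiden + 4 * D * h
  · intro h
    have h4 : (4 : F) ≠ 0 := by
      have : (2 : F) * 2 ≠ 0 := mul_ne_zero h2 h2
      intro hc; exact this (by rw [← hc]; norm_num)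
    have hD2 : D ^ 2 = 0 := by
      have : 4 * D ^ 2 = 0 := by linear_combination -hiden + h
      rcases mul_eq_zero.mp this with h' | h'
      · exact absurd h' h4
      · exact h'
    exact pow_eq_zero_iff (n := 2) (by norm_num) |>.mp hD2
end
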